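/- arXiv:2605.26850 — 3 statements merged into one kernel-verified Lean document; each statement's English description precedes it below -/
import Mathlib

section
/- Let (Ω, μ) be a measure space and let p_A, p_B : Ω → ℝ be measurable functions that are strictly positive μ-almost everywhere and satisfy ∫ p_A dμ = ∫ p_B dμ = 1. For a measurable function F : Ω → ℝ define the logistic classification loss L(F) = −∫ p_A(x) log σ(F(x)) dμ(x) − ∫ p_B(x) log(1 − σ(F(x))) dμ(x), where σ(u) = 1/(1 + exp(−u)) is the logistic sigmoid (both integrands are nonnegative, so L(F) is well defined in [0, ∞]). Then for every measurable F : Ω → ℝ, L(F) ≥ L(F*), where F*(x) = log p_A(x) − log p_B(x). -/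
open MeasureTheory
open scoped ENNReal

/-- The logistic sigmoid `σ(u) = 1 / (1 + exp (-u))`. -/
noncomputable def sigmoid (u : ℝ) : ℝ := 1 / (1 + Real.exp (-u))

/-- The logistic classification loss
`L(F) = −∫ p_A log σ(F) dμ − ∫ p_B log (1 − σ(F)) dμ`, valued in `[0, ∞]`
(both integrands are nonnegative, so we use lower integrals of their
nonnegative parts). -/
noncomputable def logisticLoss {Ω : Type*} [MeasurableSpace Ω] (μ : Measure Ω)
    (pA pB F : Ω → ℝ) : ℝ≥0∞ :=
  (∫⁻ x, ENNReal.ofReal (-(pA x * Real.log (sigmoid (F x)))) ∂μ)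
    + ∫⁻ x, ENNReal.ofReal (-(pB x * Real.log (1 - sigmoid (F x)))) ∂μ

/-!
At each point the integrand of the loss is `-(a log s + b log (1 - s))` with `a = p_A(x)`,
`b = p_B(x)` and `s = σ(F(x))`. By Gibbs' inequality (i.e. `log y ≤ y - 1`) this is minimised over
`s ∈ (0, 1)` at `s = a / (a + b)`, which is exactly `σ(F*(x))`. Integrating the pointwise bound
gives the theorem.
-/

lemma sigmoid_eq_real_sigmoid : sigmoid = Real.sigmoid := by
  ext u
  rw [sigmoid, Real.sigmoid_def, one_div]

namespace Real

lemma log_sigmoid_nonpos (u : ℝ) : log (sigmoid u) ≤ 0 :=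
  log_nonpos (sigmoid_nonneg u) (sigmoid_le_one u)

lemma sigmoid_log_sub_log {a b : ℝ} (ha : 0 < a) (hb : 0 < b) :
    sigmoid (log a - log b) = a / (a + b) := by
  rw [sigmoid_def, neg_sub, exp_sub, exp_log hb, exp_log ha]
  field_simp

lemma mul_log_le_mul_log_div_add {a s c : ℝ} (ha : 0 < a) (hs : 0 < s) (hc : 0 < c) :
    a * log s ≤ a * log (a / c) + c * s - a := by
  have hlog : log (c * s / a) ≤ c * s / a - 1 := log_le_sub_one_of_pos (by positivity)
  rw [log_div (by positivity) ha.ne', log_mul hc.ne' hs.ne'] at hlog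
  rw [log_div ha.ne' hc.ne']
  have hscaled := mul_le_mul_of_nonneg_left hlog ha.le
  rw [mul_sub a (c * s / a), mul_div_cancel₀ _ ha.ne'] at hscaled
  linarith

/-- Gibbs' inequality for two points, with unnormalized weights `a`, `b`. -/
lemma mul_log_add_mul_log_le {a b s t : ℝ} (ha : 0 < a) (hb : 0 < b) (hs : 0 < s) (ht : 0 < t)
    (hst : s + t ≤ 1) :
    a * log s + b * log t ≤ a * log (a / (a + b)) + b * log (b / (a + b)) := by
  have hab : 0 < a + b := add_pos ha hb
  have hA := mul_log_le_mul_log_div_add ha hs hab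
  have hB := mul_log_le_mul_log_div_add hb ht hab
  have hmass := mul_le_mul_of_nonneg_left hst hab.le
  linarith

lemma crossEntropy_sigmoid_log_sub_log_le {a b : ℝ} (ha : 0 < a) (hb : 0 < b) (u : ℝ) :
    -(a * log (sigmoid (log a - log b))) + -(b * log (1 - sigmoid (log a - log b)))
      ≤ -(a * log (sigmoid u)) + -(b * log (1 - sigmoid u)) := by
  have hgibbs := mul_log_add_mul_log_le ha hb (sigmoid_pos u) (sigmoid_pos (-u))
    (by rw [sigmoid_neg]; linarith)
  rw [← sigmoid_neg, ← sigmoid_neg, neg_sub, sigmoid_log_sub_log ha hb,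
    sigmoid_log_sub_log hb ha, add_comm b a]
  linarith

end Real

lemma ENNReal.ofReal_add_ofReal_le_of_add_le {x y x' y' : ℝ} (hx : 0 ≤ x) (hy : 0 ≤ y)
    (h : x + y ≤ x' + y') :
    ENNReal.ofReal x + ENNReal.ofReal y ≤ ENNReal.ofReal x' + ENNReal.ofReal y' := by
  rw [← ENNReal.ofReal_add hx hy]
  exact (ENNReal.ofReal_le_ofReal h).trans ENNReal.ofReal_add_le

theorem logisticLoss_le_of_optimal_general
    {Ω : Type*} [MeasurableSpace Ω] (μ : Measure Ω)
    (pA pB : Ω → ℝ) (hpA : Measurable pA)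
    (hpApos : ∀ᵐ x ∂μ, 0 < pA x) (hpBpos : ∀ᵐ x ∂μ, 0 < pB x)
    (F : Ω → ℝ) (hF : Measurable F) :
    logisticLoss μ pA pB (fun x => Real.log (pA x) - Real.log (pB x))
      ≤ logisticLoss μ pA pB F := by
  simp only [logisticLoss, sigmoid_eq_real_sigmoid]
  have hmeas : Measurable fun x => ENNReal.ofReal (-(pA x * Real.log (Real.sigmoid (F x)))) := by
    fun_prop
  -- `∫⁻` is superadditive for all functions, but additive only when one summand is measurable.
  rw [← lintegral_add_left hmeas]
  refine (le_lintegral_add _ _).trans (lintegral_mono_ae ?_)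
  filter_upwards [hpApos, hpBpos] with x ha hb
  refine ENNReal.ofReal_add_ofReal_le_of_add_le ?_ ?_
    (Real.crossEntropy_sigmoid_log_sub_log_le ha hb (F x))
  · exact neg_nonneg.mpr (mul_nonpos_of_nonneg_of_nonpos ha.le (Real.log_sigmoid_nonpos _))
  · rw [← Real.sigmoid_neg]
    exact neg_nonneg.mpr (mul_nonpos_of_nonneg_of_nonpos hb.le (Real.log_sigmoid_nonpos _))

/-- The optimal logistic classifier between densities `p_A` and `p_B` is
`F*(x) = log p_A(x) − log p_B(x)`: every measurable `F` has at least as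
large a logistic loss. -/
theorem logisticLoss_le_of_optimal
    {Ω : Type*} [MeasurableSpace Ω] (μ : Measure Ω)
    (pA pB : Ω → ℝ) (hpA : Measurable pA) (hpB : Measurable pB)
    (hpApos : ∀ᵐ x ∂μ, 0 < pA x) (hpBpos : ∀ᵐ x ∂μ, 0 < pB x)
    (hpAint : ∫ x, pA x ∂μ = 1) (hpBint : ∫ x, pB x ∂μ = 1)
    (F : Ω → ℝ) (hF : Measurable F) :
    logisticLoss μ pA pB (fun x => Real.log (pA x) - Real.log (pB x))
      ≤ logisticLoss μ pA pB F :=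
  logisticLoss_le_of_optimal_general μ pA pB hpA hpApos hpBpos F hF
end

section
/- Let (Ω, μ) be a measure space and let p_A, p_B : Ω → ℝ be measurable, strictly positive μ-almost everywhere, with ∫ p_A dμ = ∫ p_B dμ = 1. Set F*(x) = log p_A(x) − log p_B(x), and let F : Ω → ℝ be measurable with logistic classification loss L(F) < ∞. If L(F) = L(F*), then F = F* μ-almost everywhere. -/
open MeasureTheory
open scoped ENNReal

lemma sigmoid_log_sub_log {a b : ℝ} (ha : 0 < a) (hb : 0 < b) :
    sigmoid (Real.log a - Real.log b) = a / (a + b) := by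
  rw [sigmoid, neg_sub, ← Real.log_div hb.ne' ha.ne', Real.exp_log (by positivity)]
  field_simp

lemma one_sub_sigmoid_log_sub_log {a b : ℝ} (ha : 0 < a) (hb : 0 < b) :
    1 - sigmoid (Real.log a - Real.log b) = b / (a + b) := by
  rw [sigmoid_log_sub_log ha hb]
  field_simp
  ring

lemma sigmoid_pos (u : ℝ) : 0 < sigmoid u := sigmoid_eq_real_sigmoid ▸ Real.sigmoid_pos u

lemma sigmoid_lt_one (u : ℝ) : sigmoid u < 1 := sigmoid_eq_real_sigmoid ▸ Real.sigmoid_lt_one u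

@[fun_prop]
lemma measurable_sigmoid : Measurable sigmoid :=
  sigmoid_eq_real_sigmoid ▸ continuous_sigmoid.measurable

/-- Gibbs' inequality for two points: `log x ≤ x - 1` at `x = s (a + b) / a` and at
`x = (1 - s) (a + b) / b`, whose right-hand sides weighted by `a` and `b` sum to `0`. -/
lemma mul_log_add_mul_log_one_sub_lt {a b s : ℝ} (ha : 0 < a) (hb : 0 < b) (hs0 : 0 < s)
    (hs1 : s < 1) (hs : s ≠ a / (a + b)) :
    a * Real.log s + b * Real.log (1 - s)
      < a * Real.log (a / (a + b)) + b * Real.log (b / (a + b)) := by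
  have hab : 0 < a + b := by positivity
  have hA : Real.log (s * (a + b) / a) < s * (a + b) / a - 1 := by
    refine Real.log_lt_sub_one_of_pos (by positivity) ?_
    rw [ne_eq, div_eq_one_iff_eq ha.ne', ← eq_div_iff hab.ne']
    exact hs
  have hB : Real.log ((1 - s) * (a + b) / b) ≤ (1 - s) * (a + b) / b - 1 :=
    Real.log_le_sub_one_of_pos (div_pos (mul_pos (by linarith) hab) hb)
  rw [Real.log_div (by positivity) ha.ne', Real.log_mul hs0.ne' hab.ne'] at hA
  rw [Real.log_div (mul_pos (by linarith) hab).ne' hb.ne', Real.log_mul (by linarith) hab.ne'] at hB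
  rw [Real.log_div ha.ne' hab.ne', Real.log_div hb.ne' hab.ne']
  have hA' := (mul_lt_mul_iff_right₀ ha).mpr hA
  have hB' := mul_le_mul_of_nonneg_left hB hb.le
  field_simp at hA' hB'
  linarith

lemma neg_mul_log_sigmoid_nonneg {a : ℝ} (ha : 0 ≤ a) (u : ℝ) :
    0 ≤ -(a * Real.log (sigmoid u)) :=
  neg_nonneg.2 <| mul_nonpos_of_nonneg_of_nonpos ha <|
    Real.log_nonpos (sigmoid_pos u).le (sigmoid_lt_one u).le

lemma neg_mul_log_one_sub_sigmoid_nonneg {b : ℝ} (hb : 0 ≤ b) (u : ℝ) :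
    0 ≤ -(b * Real.log (1 - sigmoid u)) :=
  neg_nonneg.2 <| mul_nonpos_of_nonneg_of_nonpos hb <|
    Real.log_nonpos (sub_pos.2 (sigmoid_lt_one u)).le (sub_le_self _ (sigmoid_pos u).le)

noncomputable def pointwiseLogisticLoss (a b u : ℝ) : ℝ :=
  -(a * Real.log (sigmoid u)) + -(b * Real.log (1 - sigmoid u))

lemma pointwiseLogisticLoss_nonneg {a b : ℝ} (ha : 0 ≤ a) (hb : 0 ≤ b) (u : ℝ) :
    0 ≤ pointwiseLogisticLoss a b u :=
  add_nonneg (neg_mul_log_sigmoid_nonneg ha u) (neg_mul_log_one_sub_sigmoid_nonneg hb u)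

lemma pointwiseLogisticLoss_lt_of_ne {a b u : ℝ} (ha : 0 < a) (hb : 0 < b)
    (hu : u ≠ Real.log a - Real.log b) :
    pointwiseLogisticLoss a b (Real.log a - Real.log b) < pointwiseLogisticLoss a b u := by
  have hs : sigmoid u ≠ a / (a + b) := by
    rw [← sigmoid_log_sub_log ha hb, sigmoid_eq_real_sigmoid]
    exact Real.sigmoid_injective.ne hu
  have := mul_log_add_mul_log_one_sub_lt ha hb (sigmoid_pos u) (sigmoid_lt_one u) hs
  rw [pointwiseLogisticLoss, pointwiseLogisticLoss, one_sub_sigmoid_log_sub_log ha hb,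
    sigmoid_log_sub_log ha hb]
  linarith

lemma pointwiseLogisticLoss_le {a b : ℝ} (ha : 0 < a) (hb : 0 < b) (u : ℝ) :
    pointwiseLogisticLoss a b (Real.log a - Real.log b) ≤ pointwiseLogisticLoss a b u := by
  rcases eq_or_ne u (Real.log a - Real.log b) with rfl | hu
  · exact le_rfl
  · exact (pointwiseLogisticLoss_lt_of_ne ha hb hu).le

lemma logisticLoss_eq_lintegral {Ω : Type*} [MeasurableSpace Ω] {μ : Measure Ω}
    {pA pB F : Ω → ℝ} (hpA : Measurable pA) (hF : Measurable F)
    (hpA0 : ∀ᵐ x ∂μ, 0 ≤ pA x) (hpB0 : ∀ᵐ x ∂μ, 0 ≤ pB x) :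
    logisticLoss μ pA pB F
      = ∫⁻ x, ENNReal.ofReal (pointwiseLogisticLoss (pA x) (pB x) (F x)) ∂μ := by
  rw [logisticLoss, ← lintegral_add_left (by fun_prop)]
  refine lintegral_congr_ae ?_
  filter_upwards [hpA0, hpB0] with x ha hb
  rw [pointwiseLogisticLoss, ENNReal.ofReal_add (neg_mul_log_sigmoid_nonneg ha _)
    (neg_mul_log_one_sub_sigmoid_nonneg hb _)]

theorem eq_optimal_of_logisticLoss_eq_general
    {Ω : Type*} [MeasurableSpace Ω] (μ : Measure Ω)
    (pA pB : Ω → ℝ) (hpA : Measurable pA) (hpB : Measurable pB)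
    (hpApos : ∀ᵐ x ∂μ, 0 < pA x) (hpBpos : ∀ᵐ x ∂μ, 0 < pB x)
    (F : Ω → ℝ) (hF : Measurable F)
    (hfin : logisticLoss μ pA pB F < ∞)
    (heq : logisticLoss μ pA pB F
      = logisticLoss μ pA pB (fun x => Real.log (pA x) - Real.log (pB x))) :
    F =ᵐ[μ] fun x => Real.log (pA x) - Real.log (pB x) := by
  have hpA0 : ∀ᵐ x ∂μ, 0 ≤ pA x := hpApos.mono fun _ h => h.le
  have hpB0 : ∀ᵐ x ∂μ, 0 ≤ pB x := hpBpos.mono fun _ h => h.le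
  rw [logisticLoss_eq_lintegral hpA hF hpA0 hpB0] at hfin heq
  rw [logisticLoss_eq_lintegral hpA (by fun_prop) hpA0 hpB0] at heq
  have hle : (fun x => ENNReal.ofReal
        (pointwiseLogisticLoss (pA x) (pB x) (Real.log (pA x) - Real.log (pB x))))
      ≤ᵐ[μ] fun x => ENNReal.ofReal (pointwiseLogisticLoss (pA x) (pB x) (F x)) := by
    filter_upwards [hpApos, hpBpos] with x ha hb
    exact ENNReal.ofReal_le_ofReal (pointwiseLogisticLoss_le ha hb _)
  have hae := ae_eq_of_ae_le_of_lintegral_le hle (heq ▸ hfin.ne)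
    (by unfold pointwiseLogisticLoss; fun_prop) heq.le
  filter_upwards [hae, hpApos, hpBpos] with x hx ha hb
  by_contra hne
  exact (ENNReal.ofReal_lt_ofReal_iff_of_nonneg (pointwiseLogisticLoss_nonneg ha.le hb.le _)
    |>.2 (pointwiseLogisticLoss_lt_of_ne ha hb hne)).ne hx

/-- If a measurable `F` with finite logistic loss attains the same loss as the
optimal classifier `F* = log p_A − log p_B`, then `F = F*` μ-almost everywhere. -/
theorem eq_optimal_of_logisticLoss_eq
    {Ω : Type*} [MeasurableSpace Ω] (μ : Measure Ω)
    (pA pB : Ω → ℝ) (hpA : Measurable pA) (hpB : Measurable pB)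
    (hpApos : ∀ᵐ x ∂μ, 0 < pA x) (hpBpos : ∀ᵐ x ∂μ, 0 < pB x)
    (hpAint : ∫ x, pA x ∂μ = 1) (hpBint : ∫ x, pB x ∂μ = 1)
    (F : Ω → ℝ) (hF : Measurable F)
    (hfin : logisticLoss μ pA pB F < ∞)
    (heq : logisticLoss μ pA pB F
      = logisticLoss μ pA pB (fun x => Real.log (pA x) - Real.log (pB x))) :
    F =ᵐ[μ] fun x => Real.log (pA x) - Real.log (pB x) :=
  eq_optimal_of_logisticLoss_eq_general μ pA pB hpA hpB hpApos hpBpos F hF hfin heq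
end

section
/- (Density of the folded Gaussian kernel.) Let σ > 0 and let φ_σ(u) = (2πσ²)^{−1/2} exp(−u²/(2σ²)) be the density of the centered Gaussian with variance σ². Define the fold map f : ℝ → [0, 1] by f(x) = 1 − |(x mod 2) − 1|. Then for every t ∈ ℝ, the pushforward under f of the Gaussian measure with mean t and variance σ² is absolutely continuous with respect to Lebesgue measure on [0, 1], with density g(t, t′) = Σ_{k ∈ ℤ} [φ_σ(2k + t′ − t) + φ_σ(2k − t′ − t)] for t′ ∈ [0, 1] (the series converging absolutely). -/
open MeasureTheory ProbabilityTheory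
open scoped ENNReal

/-- The 2-periodic tent ("fold") map `f(x) = 1 − |(x mod 2) − 1|`, sending `ℝ`
onto `[0, 1]`; here `x mod 2 = 2 · fract (x / 2) ∈ [0, 2)`. -/
noncomputable def fold (x : ℝ) : ℝ := 1 - |2 * Int.fract (x / 2) - 1|

/-- The density `φ_σ(u) = (2πσ²)^{−1/2} exp(−u²/(2σ²))` of the centered
one-dimensional Gaussian with variance `σ²`. -/
noncomputable def gaussPDF (σ u : ℝ) : ℝ :=
  (2 * Real.pi * σ ^ 2) ^ (-(1 : ℝ) / 2) * Real.exp (-u ^ 2 / (2 * σ ^ 2))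
/-! On each interval `[2k - 1, 2k + 1]` the fold map is `x ↦ |x - 2k|`. Cutting `ℝ` into these
intervals, the integral of a density `φ` over `fold ⁻¹' s` becomes a sum over `k` of integrals over
`s ∩ [0, 1]` of `φ (2k + u) + φ (2k - u)`, one term for each branch of the absolute value; monotone
convergence exchanges the sum and the integral. For the Gaussian density the series converges by
comparison with a Jacobi theta series. -/

open Set Function

lemma fold_periodic : Periodic fold 2 := by
  intro x
  simp only [fold, add_div, div_self (two_ne_zero' ℝ), Int.fract_add_one]

lemma fold_eq_abs {x : ℝ} (hx : |x| ≤ 1) : fold x = |x| := by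
  obtain ⟨h₁, h₂⟩ := abs_le.mp hx
  rcases le_or_gt 0 x with hx₀ | hx₀
  · have : Int.fract (x / 2) = x / 2 := Int.fract_eq_self.mpr ⟨by linarith, by linarith⟩
    rw [fold, this, abs_of_nonpos (by linarith), abs_of_nonneg hx₀]
    ring
  · have : Int.fract (x / 2) = x / 2 + 1 :=
      Int.fract_eq_iff.mpr ⟨by linarith, by linarith, -1, by push_cast; ring⟩
    rw [fold, this, abs_of_nonneg (by linarith), abs_of_neg hx₀]
    ring

lemma fold_eq_abs_sub_two_mul {k : ℤ} {x : ℝ} (hx : |x - 2 * k| ≤ 1) :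
    fold x = |x - 2 * k| := by
  rw [← fold_eq_abs hx, mul_comm, fold_periodic.sub_int_mul_eq]

lemma measurable_fold : Measurable fold := by
  unfold fold; fun_prop

lemma iUnion_Ico_two_mul_sub_one : ⋃ k : ℤ, Ico (2 * k - 1 : ℝ) (2 * k + 1) = univ := by
  convert iUnion_Ico_add_zsmul two_pos (-1 : ℝ) using 3 with k
  simp only [zsmul_eq_mul]; push_cast
  congr 1 <;> ring

lemma pairwise_disjoint_Ico_two_mul_sub_one :
    Pairwise (Disjoint on fun k : ℤ => Ico (2 * k - 1 : ℝ) (2 * k + 1)) := by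
  convert pairwise_disjoint_Ico_add_zsmul (-1 : ℝ) (2 : ℝ) using 3 with k
  simp only [zsmul_eq_mul]; push_cast
  congr 1 <;> ring

lemma setLIntegral_preimage_abs {ψ : ℝ → ℝ≥0∞} (hψ : Measurable ψ) {s : Set ℝ}
    (hs : MeasurableSet s) (hs₀ : s ⊆ Ici 0) :
    ∫⁻ y in abs ⁻¹' s, ψ y = ∫⁻ u in s, (ψ u + ψ (-u)) := by
  have h_nonneg : abs ⁻¹' s ∩ Ici 0 = s := by
    ext y
    refine ⟨fun ⟨hy, hy₀⟩ => ?_, fun hy => ⟨?_, hs₀ hy⟩⟩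
    · rwa [mem_preimage, abs_of_nonneg hy₀] at hy
    · rwa [mem_preimage, abs_of_nonneg (hs₀ hy)]
  have h_neg : abs ⁻¹' s ∩ Iio 0 = Neg.neg ⁻¹' (s ∩ Ioi 0) := by
    ext y
    simp only [mem_inter_iff, mem_preimage, mem_Iio, mem_Ioi, neg_pos]
    refine and_congr_left fun hy => ?_
    rw [abs_of_neg hy]
  have h_ae : (s ∩ Ioi 0 : Set ℝ) =ᵐ[volume] s := by
    simpa only [inter_eq_left.mpr hs₀] using
      (Filter.EventuallyEq.refl _ s).inter (Ioi_ae_eq_Ici (μ := volume) (a := (0 : ℝ)))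
  have hs' : MeasurableSet (abs ⁻¹' s) := measurable_abs hs
  rw [← inter_univ (abs ⁻¹' s), ← Ici_union_Iio (a := (0 : ℝ)), inter_union_distrib_left,
    lintegral_union (hs'.inter measurableSet_Iio)
      (disjoint_left.mpr fun _ h₁ h₂ => not_lt.mpr (mem_Ici.mp h₁.2) h₂.2),
    h_nonneg, h_neg, lintegral_add_left hψ]
  congr 1
  rw [← setLIntegral_congr h_ae]
  simpa only [neg_neg] using (Measure.measurePreserving_neg volume).setLIntegral_comp_preimage_emb
    (MeasurableEquiv.neg ℝ).measurableEmbedding (fun u => ψ (-u)) (s ∩ Ioi 0)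

lemma fold_preimage_inter_Icc (s : Set ℝ) (k : ℤ) :
    fold ⁻¹' s ∩ Icc (2 * k - 1 : ℝ) (2 * k + 1) =
      (fun x : ℝ => x - 2 * k) ⁻¹' (abs ⁻¹' (s ∩ Icc 0 1)) := by
  ext x
  have hx : x ∈ Icc (2 * k - 1 : ℝ) (2 * k + 1) ↔ |x - 2 * k| ≤ 1 := by
    rw [abs_sub_le_iff, mem_Icc]
    constructor <;> rintro ⟨h₁, h₂⟩ <;> constructor <;> linarith
  simp only [mem_inter_iff, mem_preimage, mem_Icc, abs_nonneg, true_and, hx]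
  exact ⟨fun ⟨h, hk⟩ => ⟨fold_eq_abs_sub_two_mul hk ▸ h, hk⟩,
    fun ⟨h, hk⟩ => ⟨(fold_eq_abs_sub_two_mul hk).symm ▸ h, hk⟩⟩

lemma setLIntegral_fold_preimage_inter_Ico (ψ : ℝ → ℝ≥0∞) (s : Set ℝ) (k : ℤ) :
    ∫⁻ x in fold ⁻¹' s ∩ Ico (2 * k - 1) (2 * k + 1), ψ x
      = ∫⁻ y in abs ⁻¹' (s ∩ Icc 0 1), ψ (2 * k + y) := by
  rw [setLIntegral_congr ((Filter.EventuallyEq.refl _ _).inter Ico_ae_eq_Icc),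
    fold_preimage_inter_Icc]
  simpa only [add_sub_cancel] using
    (measurePreserving_sub_right volume (2 * k : ℝ)).setLIntegral_comp_preimage_emb
      (MeasurableEquiv.subRight (2 * k : ℝ)).measurableEmbedding (fun y => ψ (2 * k + y)) _

theorem map_fold_withDensity {φ : ℝ → ℝ≥0∞} (hφ : Measurable φ) :
    (volume.withDensity φ).map fold = (volume.restrict (Icc 0 1)).withDensity
      fun u => ∑' k : ℤ, (φ (2 * k + u) + φ (2 * k - u)) := by
  ext s hs
  have hpieces (k : ℤ) : MeasurableSet (fold ⁻¹' s ∩ Ico (2 * k - 1 : ℝ) (2 * k + 1)) :=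
    (measurable_fold hs).inter measurableSet_Ico
  rw [Measure.map_apply measurable_fold hs, withDensity_apply _ (measurable_fold hs),
    withDensity_apply _ hs, Measure.restrict_restrict hs,
    lintegral_tsum fun k => by fun_prop, ← inter_univ (fold ⁻¹' s),
    ← iUnion_Ico_two_mul_sub_one, inter_iUnion,
    lintegral_iUnion hpieces (pairwise_disjoint_Ico_two_mul_sub_one.mono fun _ _ h =>
      h.mono inter_subset_right inter_subset_right)]
  congr 1 with k
  rw [setLIntegral_fold_preimage_inter_Ico, setLIntegral_preimage_abs (by fun_prop)
    (hs.inter measurableSet_Icc) (inter_subset_right.trans Icc_subset_Ici_self)]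
  simp only [sub_eq_add_neg]

lemma summable_gaussPDF_two_mul_add {σ : ℝ} (hσ : σ ≠ 0) (c : ℝ) :
    Summable fun k : ℤ => gaussPDF σ (2 * k + c) := by
  -- `f_int 0 a τ n = exp (-π (n + a)² τ)` and `(2k + c)² / (2σ²) = π (k + c/2)² · 2 / (πσ²)`.
  have ht : 0 < 2 / (Real.pi * σ ^ 2) := by positivity
  refine ((HurwitzKernelBounds.summable_f_int 0 (c / 2) ht).mul_left
    ((2 * Real.pi * σ ^ 2) ^ (-(1 : ℝ) / 2))).congr fun k => ?_
  simp only [HurwitzKernelBounds.f_int, pow_zero, one_mul, gaussPDF]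
  congr 2
  field_simp

lemma gaussianPDF_eq_ofReal_gaussPDF {σ : ℝ} {v : NNReal} (hv : (v : ℝ) = σ ^ 2) (t x : ℝ) :
    gaussianPDF t v x = ENNReal.ofReal (gaussPDF σ (x - t)) := by
  rw [gaussianPDF, gaussianPDFReal, gaussPDF, hv, Real.sqrt_eq_rpow,
    ← Real.rpow_neg (by positivity), neg_div 2 (1 : ℝ)]

lemma gaussPDF_nonneg (σ u : ℝ) : 0 ≤ gaussPDF σ u := by
  unfold gaussPDF; positivity

/-- Density of the folded Gaussian kernel: the pushforward under the fold map
of the Gaussian measure with mean `t` and variance `σ²` is absolutely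
continuous with respect to Lebesgue measure on `[0, 1]`, with density
`g(t, t′) = Σ_{k ∈ ℤ} [φ_σ(2k + t′ − t) + φ_σ(2k − t′ − t)]`, the series
converging absolutely. -/
theorem fold_gaussian_density (σ : ℝ) (hσ : 0 < σ) (t : ℝ) :
    (∀ t' : ℝ,
      Summable fun k : ℤ =>
        gaussPDF σ (2 * k + t' - t) + gaussPDF σ (2 * k - t' - t)) ∧
    Measure.map fold (gaussianReal t ⟨σ ^ 2, sq_nonneg σ⟩)
      = (volume.restrict (Set.Icc (0 : ℝ) 1)).withDensity
          (fun t' => ENNReal.ofReal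
            (∑' k : ℤ,
              (gaussPDF σ (2 * k + t' - t) + gaussPDF σ (2 * k - t' - t)))) := by
  have hsum (t' : ℝ) : Summable fun k : ℤ =>
      gaussPDF σ (2 * k + t' - t) + gaussPDF σ (2 * k - t' - t) := by
    simpa only [add_sub_assoc, sub_sub, ← sub_eq_add_neg] using
      (summable_gaussPDF_two_mul_add hσ.ne' (t' - t)).add
        (summable_gaussPDF_two_mul_add hσ.ne' (-(t' + t)))
  refine ⟨hsum, ?_⟩
  set v : NNReal := ⟨σ ^ 2, sq_nonneg σ⟩
  have hv : (v : ℝ) = σ ^ 2 := rfl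
  rw [gaussianReal_of_var_ne_zero t (by simpa [← NNReal.coe_ne_zero, hv] using hσ.ne'),
    map_fold_withDensity (measurable_gaussianPDF t _)]
  congr with t'
  rw [ENNReal.ofReal_tsum_of_nonneg
    (fun k => add_nonneg (gaussPDF_nonneg _ _) (gaussPDF_nonneg _ _)) (hsum t')]
  simp only [gaussianPDF_eq_ofReal_gaussPDF hv,
    ENNReal.ofReal_add (gaussPDF_nonneg _ _) (gaussPDF_nonneg _ _)]
end
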